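/- arXiv:2010.06297 — 4 statements merged into one kernel-verified Lean document; each statement's English description precedes it below -/
import Mathlib

section
/- The function a ↦ a^ν I_ν(x/a) is monotonically decreasing on [1, ∞) for any fixed x > 0 and ν ≥ 0, where I_ν is the modified Bessel function of the first kind. -/
/-- Modified Bessel function of the first kind `I_ν(x)` (for `x > 0`). -/
noncomputable def besselI (ν x : ℝ) : ℝ :=
  ∑' m : ℕ, (x / 2) ^ ((2 * m : ℝ) + ν) / (m.factorial * Real.Gamma (m + ν + 1))

/-!
For `a > 0` the power series of `I_ν` rescales as
`a ^ ν * I_ν (x / a) = ∑ₘ (x / 2) ^ (2m + ν) / (m! Γ(m + ν + 1)) * a ^ (-2m)`: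
the coefficients are nonnegative and independent of `a`, and every `a ^ (-2m)` decreases in `a`,
so the sum decreases on all of `(0, ∞)`.
-/

open Real Set Nat

lemma Real.Gamma_le_Gamma_nat_add {s : ℝ} (hs : 1 ≤ s) (m : ℕ) : Gamma s ≤ Gamma (m + s) := by
  induction m with
  | zero => simp
  | succ n ih =>
    rw [Nat.cast_succ, add_right_comm, Gamma_add_one (by positivity)]
    exact ih.trans (le_mul_of_one_le_left (by positivity) (by linarith))

lemma summable_pow_div_factorial_mul_Gamma {ν : ℝ} (hν : 0 ≤ ν) (r : ℝ) :
    Summable fun m : ℕ => r ^ m / (m ! * Gamma (m + ν + 1)) := by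
  refine .of_norm_bounded ((summable_pow_div_factorial |r|).div_const (Gamma (ν + 1))) fun m => ?_
  have hΓ : Gamma (ν + 1) ≤ Gamma (m + ν + 1) := by
    simpa only [add_assoc] using Gamma_le_Gamma_nat_add (by linarith) m
  rw [norm_div, norm_pow, Real.norm_eq_abs, norm_of_nonneg (by positivity), div_div]
  gcongr

noncomputable def besselITerm (ν x : ℝ) (m : ℕ) : ℝ :=
  (x / 2) ^ ((2 * m : ℝ) + ν) / (m ! * Gamma (m + ν + 1))

lemma besselI_eq_tsum_besselITerm (ν x : ℝ) : besselI ν x = ∑' m, besselITerm ν x m := rfl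

lemma besselITerm_nonneg {ν x : ℝ} (hν : 0 ≤ ν) (hx : 0 ≤ x) (m : ℕ) : 0 ≤ besselITerm ν x m := by
  unfold besselITerm
  positivity

lemma besselITerm_eq {ν x : ℝ} (hx : 0 < x) (m : ℕ) :
    besselITerm ν x m = (x / 2) ^ ν * ((x / 2) ^ 2) ^ m / (m ! * Gamma (m + ν + 1)) := by
  rw [besselITerm, rpow_add (by positivity), ← pow_mul, ← rpow_natCast, mul_comm, Nat.cast_mul,
    Nat.cast_ofNat, mul_div_assoc]

lemma summable_besselITerm {ν x : ℝ} (hν : 0 ≤ ν) (hx : 0 < x) : Summable (besselITerm ν x) := by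
  simp only [funext (besselITerm_eq hx), mul_div_assoc]
  exact (summable_pow_div_factorial_mul_Gamma hν _).mul_left _

lemma rpow_mul_besselITerm_div {ν x a : ℝ} (hx : 0 ≤ x) (ha : 0 < a) (m : ℕ) :
    a ^ ν * besselITerm ν (x / a) m = besselITerm ν x m / a ^ (2 * m) := by
  rw [besselITerm, besselITerm, div_right_comm, div_rpow (by positivity) ha.le,
    rpow_add ha, ← Nat.cast_ofNat, ← Nat.cast_mul, rpow_natCast]
  field_simp

theorem antitoneOn_rpow_mul_besselI_Ioi {ν x : ℝ} (hν : 0 ≤ ν) (hx : 0 < x) :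
    AntitoneOn (fun a => a ^ ν * besselI ν (x / a)) (Ioi 0) := by
  have hsum : ∀ c ∈ Ioi (0 : ℝ), Summable fun m => besselITerm ν x m / c ^ (2 * m) := fun c hc =>
    ((summable_besselITerm hν (div_pos hx hc)).mul_left (c ^ ν)).congr
      (rpow_mul_besselITerm_div hx.le hc)
  intro a ha b hb hab
  simp only [besselI_eq_tsum_besselITerm, ← tsum_mul_left, rpow_mul_besselITerm_div hx.le ha,
    rpow_mul_besselITerm_div hx.le hb]
  refine (hsum b hb).tsum_le_tsum (fun m => ?_) (hsum a ha)
  have := besselITerm_nonneg hν hx.le m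
  rw [mem_Ioi] at ha
  gcongr

/-- For fixed `x > 0` and `ν ≥ 0`, the function `a ↦ a^ν I_ν(x/a)` is monotonically
decreasing on `[1, ∞)`. -/
theorem antitoneOn_rpow_mul_besselI (ν : ℝ) (hν : 0 ≤ ν) (x : ℝ) (hx : 0 < x) :
    AntitoneOn (fun a : ℝ => a ^ ν * besselI ν (x / a)) (Set.Ici 1) :=
  (antitoneOn_rpow_mul_besselI_Ioi hν hx).mono (Ici_subset_Ioi.2 one_pos)
end

section
/- For all x ≥ √3·π and all real a ≥ 2, one has I_{3/2}(x/a) ≤ (1/4) a^(−3/2) I_{3/2}(x), where I_{3/2} is the modified Bessel function of the first kind of order 3/2. -/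
/-!
Writing `y = (x / 2) ^ 2`, one has `a ^ ν * I_ν (x / a) = (x / 2) ^ ν * D_ν (y / a ^ 2)` for the
power series `D_ν` with positive coefficients `1 / (m! Γ(m + ν + 1))`. Hence
`a ↦ a ^ ν * I_ν (x / a)` is antitone, and it suffices to treat `a = 2`, i.e. to show
`4 * D_{3/2} (y / 4) ≤ D_{3/2} y`. Comparing coefficients, only the constant term has the wrong
sign, and for `y ≥ 27 / 4` (guaranteed by `x ≥ √3 π`, as `π > 3`) it is already compensated by
the terms of degree two and three.
-/

open Real Filter Finset
open scoped Nat

noncomputable def besselCoeff (ν : ℝ) (m : ℕ) : ℝ := (m ! * Gamma (m + ν + 1))⁻¹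

noncomputable def besselSeries (ν y : ℝ) : ℝ := ∑' m : ℕ, besselCoeff ν m * y ^ m

lemma mul_div_pow_le_pow {k y : ℝ} (hk : 1 ≤ k) (hy : 0 ≤ y) {n : ℕ} (hn : n ≠ 0) :
    k * (y / k) ^ n ≤ y ^ n := by
  obtain ⟨n, rfl⟩ := Nat.exists_eq_succ_of_ne_zero hn
  have hk0 : k ≠ 0 := by positivity
  calc k * (y / k) ^ (n + 1) = (y / k) ^ n * y := by rw [pow_succ]; field_simp
    _ ≤ y ^ n * y := by gcongr; exact div_le_self hy hk
    _ = y ^ (n + 1) := (pow_succ y n).symm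

lemma mul_tsum_div_pow_le_of_sum_range {c : ℕ → ℝ} (hc : ∀ m, 0 ≤ c m) {k y : ℝ} (hk : 1 ≤ k)
    (hy : 0 ≤ y) (hs : Summable fun m ↦ c m * y ^ m)
    (hsk : Summable fun m ↦ c m * (y / k) ^ m) {N : ℕ} (hN : N ≠ 0)
    (h : k * ∑ m ∈ range N, c m * (y / k) ^ m ≤ ∑ m ∈ range N, c m * y ^ m) :
    k * ∑' m, c m * (y / k) ^ m ≤ ∑' m, c m * y ^ m := by
  have htail : k * ∑' m, c (m + N) * (y / k) ^ (m + N) ≤ ∑' m, c (m + N) * y ^ (m + N) := by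
    rw [← tsum_mul_left]
    refine Summable.tsum_le_tsum (fun m ↦ ?_) (((summable_nat_add_iff N).mpr hsk).mul_left k)
      ((summable_nat_add_iff N).mpr hs)
    rw [mul_left_comm]
    exact mul_le_mul_of_nonneg_left (mul_div_pow_le_pow hk hy (by omega)) (hc _)
  rw [← hs.sum_add_tsum_nat_add N, ← hsk.sum_add_tsum_nat_add N, mul_add]
  exact add_le_add h htail

section BesselSeries

variable {ν : ℝ}

lemma besselCoeff_pos (hν : -1 < ν) (m : ℕ) : 0 < besselCoeff ν m := by
  have := Gamma_pos_of_pos (show 0 < (m : ℝ) + ν + 1 by linarith [m.cast_nonneg (α := ℝ)])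
  unfold besselCoeff
  positivity

lemma besselCoeff_succ {m : ℕ} (hm : (m : ℝ) + ν + 1 ≠ 0) :
    besselCoeff ν (m + 1) = besselCoeff ν m / ((m + 1) * (m + ν + 1)) := by
  simp only [besselCoeff, Nat.factorial_succ, Nat.cast_mul, Nat.cast_succ,
    show (m : ℝ) + 1 + ν + 1 = (m + ν + 1) + 1 by ring, Gamma_add_one hm]
  rw [div_eq_mul_inv, ← mul_inv]
  ring_nf

/-- Eventually `Γ(m + ν + 1) ≥ 1`, so the series is dominated by that of `exp |y|`. -/
lemma summable_besselCoeff_mul_pow (ν y : ℝ) : Summable fun m ↦ besselCoeff ν m * y ^ m := by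
  refine .of_norm_bounded_eventually (Real.summable_pow_div_factorial |y|) ?_
  obtain ⟨N, hN⟩ := exists_nat_ge (1 - ν)
  rw [Nat.cofinite_eq_atTop]
  filter_upwards [eventually_ge_atTop N] with m hm
  have hm' : (N : ℝ) ≤ m := by exact_mod_cast hm
  have hΓ : 1 ≤ Gamma (m + ν + 1) := by
    have := Gamma_strictMonoOn_Ici.monotoneOn (a := 2) (b := m + ν + 1) (by simp)
      (by simp; linarith) (by linarith)
    rwa [Gamma_two] at this
  have hfac : (0 : ℝ) < m ! := by positivity
  simp only [norm_mul, norm_pow, Real.norm_eq_abs]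
  rw [besselCoeff, abs_inv, abs_of_pos (by positivity), inv_mul_eq_div]
  gcongr
  exact le_mul_of_one_le_right hfac.le hΓ

lemma besselSeries_mono (hν : -1 < ν) {y z : ℝ} (hy : 0 ≤ y) (hyz : y ≤ z) :
    besselSeries ν y ≤ besselSeries ν z :=
  Summable.tsum_le_tsum
    (fun m ↦ mul_le_mul_of_nonneg_left (pow_le_pow_left₀ hy hyz m) (besselCoeff_pos hν m).le)
    (summable_besselCoeff_mul_pow ν y) (summable_besselCoeff_mul_pow ν z)

lemma besselI_eq_rpow_mul_besselSeries (ν : ℝ) {t : ℝ} (ht : 0 < t) :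
    besselI ν t = (t / 2) ^ ν * besselSeries ν ((t / 2) ^ 2) := by
  rw [besselI, besselSeries, ← tsum_mul_left]
  congr 1 with m
  rw [show (2 * m : ℝ) + ν = ((2 * m : ℕ) : ℝ) + ν by push_cast; ring,
    rpow_add (by positivity), rpow_natCast, pow_mul, besselCoeff]
  ring

lemma rpow_mul_besselI_div (ν : ℝ) {x a : ℝ} (hx : 0 < x) (ha : 0 < a) :
    a ^ ν * besselI ν (x / a) = (x / 2) ^ ν * besselSeries ν ((x / 2) ^ 2 / a ^ 2) := by
  rw [besselI_eq_rpow_mul_besselSeries ν (by positivity), ← mul_assoc,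
    show x / a / 2 = x / 2 / a by ring, div_rpow (by positivity) ha.le,
    mul_div_cancel₀ _ (rpow_pos_of_pos ha ν).ne', div_pow]

lemma antitoneOn_rpow_mul_besselI_div (hν : -1 < ν) {x : ℝ} (hx : 0 < x) :
    AntitoneOn (fun a ↦ a ^ ν * besselI ν (x / a)) (Set.Ioi 0) := by
  intro b (hb : 0 < b) a _ hab
  simp only [rpow_mul_besselI_div ν hx hb, rpow_mul_besselI_div ν hx (lt_of_lt_of_le hb hab)]
  gcongr
  exact besselSeries_mono hν (by positivity) (by gcongr)

end BesselSeries

lemma four_mul_besselSeries_three_halves_div_four_le {y : ℝ} (hy : 27 / 4 ≤ y) :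
    4 * besselSeries (3 / 2) (y / 4) ≤ besselSeries (3 / 2) y := by
  refine mul_tsum_div_pow_le_of_sum_range (besselCoeff_pos (by norm_num) · |>.le) (by norm_num)
    (by linarith) (summable_besselCoeff_mul_pow _ _) (summable_besselCoeff_mul_pow _ _)
    (N := 4) (by norm_num) ?_
  set c₀ := besselCoeff (3 / 2) 0
  have hc₀ : 0 < c₀ := besselCoeff_pos (by norm_num) 0
  have hc₁ : besselCoeff (3 / 2) 1 = 2 / 5 * c₀ := by
    rw [besselCoeff_succ (by norm_num)]; norm_num; ring
  have hc₂ : besselCoeff (3 / 2) 2 = 2 / 35 * c₀ := by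
    rw [besselCoeff_succ (by norm_num), hc₁]; norm_num; ring
  have hc₃ : besselCoeff (3 / 2) 3 = 4 / 945 * c₀ := by
    rw [besselCoeff_succ (by norm_num), hc₂]; norm_num; ring
  have hpoly : 3 ≤ 3 / 70 * y ^ 2 + y ^ 3 / 252 := by nlinarith
  simp only [sum_range_succ, sum_range_zero, hc₁, hc₂, hc₃]
  linarith [mul_le_mul_of_nonneg_left hpoly hc₀.le]

lemma rpow_mul_besselI_three_halves_half_le {x : ℝ} (hx : √3 * π ≤ x) :
    2 ^ (3 / 2 : ℝ) * besselI (3 / 2) (x / 2) ≤ 1 / 4 * besselI (3 / 2) x := by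
  have hx0 : 0 < x := lt_of_lt_of_le (by positivity) hx
  have hy : 27 / 4 ≤ (x / 2) ^ 2 := by
    have hsq : (√3 * π) ^ 2 ≤ x ^ 2 := pow_le_pow_left₀ (by positivity) hx 2
    rw [mul_pow, sq_sqrt (by norm_num)] at hsq
    nlinarith [pi_gt_three]
  rw [rpow_mul_besselI_div _ hx0 two_pos, besselI_eq_rpow_mul_besselSeries _ hx0,
    show (2 : ℝ) ^ 2 = 4 by norm_num]
  have := mul_le_mul_of_nonneg_left (four_mul_besselSeries_three_halves_div_four_le hy)
    (by positivity : (0 : ℝ) ≤ (x / 2) ^ (3 / 2 : ℝ))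
  linarith

/-- For all `x ≥ √3·π` and all real `a ≥ 2`, one has
`I_{3/2}(x/a) ≤ (1/4)·a^(−3/2)·I_{3/2}(x)`. -/
theorem besselI_three_halves_div_le (x a : ℝ) (hx : Real.sqrt 3 * Real.pi ≤ x) (ha : 2 ≤ a) :
    besselI (3 / 2) (x / a) ≤ 1 / 4 * a ^ (-(3 / 2 : ℝ)) * besselI (3 / 2) x := by
  have hx0 : 0 < x := lt_of_lt_of_le (by positivity) hx
  have ha0 : 0 < a := by linarith
  calc besselI (3 / 2) (x / a)
        = a ^ (-(3 / 2 : ℝ)) * (a ^ (3 / 2 : ℝ) * besselI (3 / 2) (x / a)) := by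
        rw [← mul_assoc, ← rpow_add ha0, neg_add_cancel, rpow_zero, one_mul]
    _ ≤ a ^ (-(3 / 2 : ℝ)) * (2 ^ (3 / 2 : ℝ) * besselI (3 / 2) (x / 2)) := by
        refine mul_le_mul_of_nonneg_left ?_ (by positivity)
        exact antitoneOn_rpow_mul_besselI_div (ν := 3 / 2) (by norm_num) hx0
          (Set.mem_Ioi.mpr two_pos) (Set.mem_Ioi.mpr ha0) ha
    _ ≤ a ^ (-(3 / 2 : ℝ)) * (1 / 4 * besselI (3 / 2) x) :=
        mul_le_mul_of_nonneg_left (rpow_mul_besselI_three_halves_half_le hx)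
          (by positivity)
    _ = 1 / 4 * a ^ (-(3 / 2 : ℝ)) * besselI (3 / 2) x := by ring
end

section
/- The number r*_Δ(a) of residues b mod 2a with b² ≡ Δ (mod 4a) satisfies r*_Δ(a) ≤ (2√2/√3)·√a for every positive integer a and every integer Δ ≡ 0, 1 (mod 4). -/
/-!
Let `N(n)` be the number of square roots of `Δ` in `ZMod n`. The condition `b² ≡ Δ (mod 4a)`
only depends on `b` modulo `2a`, so `N(4a) = 2 r*_Δ(a)`, and it suffices to show
`N(n)² ≤ (8/3) n`. By the Chinese remainder theorem `N` is multiplicative, and for prime powers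
`N(p^e)² ≤ c_p p^e` with `c_2 = 2`, `c_3 = 4/3` and `c_p = 1` for `p ≥ 5`:
if `p ∤ Δ`, two roots `x, y` satisfy `2(x - y) = 0` or `2(x + y) = 0`, leaving at most two roots
for odd `p` and at most four for `p = 2` (and at most `φ(4) = 2` modulo `4`);
if `p ∣ Δ` but `p² ∤ Δ` there is no root once `e ≥ 2`; and if `Δ = p² Δ'`, every root is `p z`
with `z` one of the `p` lifts of a root of `Δ'` modulo `p^(e-2)`, so the bound passes from
`p^(e-2)` to `p^e`.
-/

open Finset

theorem Nat.count_mul_of_periodic {P : ℕ → Prop} [DecidablePred P] {m : ℕ}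
    (hP : Function.Periodic P m) (k : ℕ) : count P (k * m) = k * count P m := by
  induction k with
  | zero => simp
  | succ k ih =>
    have hshift : count (fun j => P (k * m + j)) m = count P m := by
      congr 1; funext j; rw [add_comm]; exact hP.nat_mul k j
    rw [succ_mul, count_add, ih, hshift, succ_mul]

theorem periodic_dvd_sq_sub {n m : ℕ} (h2 : n ∣ 2 * m) (hsq : n ∣ m ^ 2) (Δ : ℤ) :
    Function.Periodic (fun b : ℕ => (n : ℤ) ∣ (b : ℤ) ^ 2 - Δ) m := by
  intro b
  have hshift :
      ((b + m : ℕ) : ℤ) ^ 2 - Δ = ((b : ℤ) ^ 2 - Δ) + (b * (2 * m : ℕ) + (m ^ 2 : ℕ)) := by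
    push_cast; ring
  have hdvd : (n : ℤ) ∣ b * (2 * m : ℕ) + (m ^ 2 : ℕ) :=
    (dvd_mul_of_dvd_right (Int.natCast_dvd_natCast.2 h2) _).add (Int.natCast_dvd_natCast.2 hsq)
  simp only [hshift, dvd_add_left hdvd]

theorem ZMod.intCast_sq_eq_iff_dvd {n : ℕ} (X Δ : ℤ) :
    (X : ZMod n) ^ 2 = Δ ↔ (n : ℤ) ∣ X ^ 2 - Δ := by
  rw [← Int.cast_pow, ZMod.intCast_eq_intCast_iff_dvd_sub, dvd_sub_comm]

theorem ZMod.natCast_sq_eq_iff_dvd {n : ℕ} (b : ℕ) (Δ : ℤ) :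
    (b : ZMod n) ^ 2 = Δ ↔ (n : ℤ) ∣ (b : ℤ) ^ 2 - Δ := by
  exact_mod_cast ZMod.intCast_sq_eq_iff_dvd (b : ℤ) Δ

theorem Prime.dvd_of_pow_dvd_sq_sub {R : Type*} [CommRing R] {p x d : R} (hp : Prime p)
    {e : ℕ} (he : e ≠ 0) (hd : p ∣ d) (h : p ^ e ∣ x ^ 2 - d) : p ∣ x :=
  hp.dvd_of_dvd_pow (n := 2) <| by simpa using ((dvd_pow_self p he).trans h).add hd

theorem Int.pow_dvd_two_mul_sub_or_two_mul_add {p k : ℕ} (hp : p.Prime) {X Y : ℤ}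
    (hX : ¬ (p : ℤ) ∣ X) (h : (p : ℤ) ^ k ∣ X ^ 2 - Y ^ 2) :
    (p : ℤ) ^ k ∣ 2 * (X - Y) ∨ (p : ℤ) ^ k ∣ 2 * (X + Y) := by
  have hpZ := Nat.prime_iff_prime_int.mp hp
  have cancel {u v : ℤ} (hu : ¬ (p : ℤ) ∣ u) (huv : (p : ℤ) ^ k ∣ u * v) : (p : ℤ) ^ k ∣ v :=
    (hpZ.coprime_iff_not_dvd.2 hu).pow_left.dvd_of_dvd_mul_left huv
  have hfac : X ^ 2 - Y ^ 2 = (X - Y) * (X + Y) := by ring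
  by_cases hsub : (p : ℤ) ∣ X - Y
  · by_cases hadd : (p : ℤ) ∣ X + Y
    · have hp2 : p = 2 := by
        have h2X : (p : ℤ) ∣ 2 * X := by simpa [two_mul] using hsub.add hadd
        have : (p : ℤ) ∣ 2 := (hpZ.dvd_or_dvd h2X).resolve_right hX
        exact (Nat.prime_dvd_prime_iff_eq hp Nat.prime_two).1 (by exact_mod_cast this)
      subst hp2
      obtain ⟨u, hu⟩ := hsub
      obtain ⟨v, hv⟩ := hadd
      push_cast at hX hu hv h cancel ⊢
      -- the halves `u` and `v` add up to the odd `X`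
      rcases (by omega : ¬ (2 : ℤ) ∣ u ∨ ¬ (2 : ℤ) ∣ v) with hu' | hv'
      · right
        exact cancel hu' (by rw [hfac, hu] at h; convert h using 1; ring)
      · left
        exact cancel hv' (by rw [hfac, hv] at h; convert h using 1; ring)
    · left
      exact (cancel hadd (by rwa [hfac, mul_comm] at h)).mul_left 2
  · right
    exact (cancel hsub (by rwa [hfac] at h)).mul_left 2

noncomputable def sqrtCount (n : ℕ) (Δ : ℤ) : ℕ :=
  Nat.card {x : ZMod n // x ^ 2 = Δ}

theorem sqrtCount_eq_count (n : ℕ) [NeZero n] (Δ : ℤ) :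
    sqrtCount n Δ = Nat.count (fun b : ℕ => (n : ℤ) ∣ (b : ℤ) ^ 2 - Δ) n := by
  rw [sqrtCount, Nat.card_eq_fintype_card, Fintype.card_subtype, Nat.count_eq_card_filter_range]
  refine card_nbij' ZMod.val Nat.cast (fun x hx => ?_) (fun b hb => ?_)
    (fun x _ => ZMod.natCast_zmod_val x) (fun b hb => ZMod.val_cast_of_lt ?_)
  · rw [mem_coe, mem_filter, ← ZMod.natCast_zmod_val x, ZMod.natCast_sq_eq_iff_dvd] at hx
    simpa [ZMod.val_lt] using hx.2
  · simp only [mem_coe, mem_filter, mem_range] at hb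
    simpa [ZMod.natCast_sq_eq_iff_dvd] using hb.2
  · exact mem_range.1 (mem_filter.1 hb).1

theorem sqrtCount_one (Δ : ℤ) : sqrtCount 1 Δ = 1 :=
  Nat.card_eq_one_iff_unique.2 ⟨inferInstance, ⟨⟨0, Subsingleton.elim _ _⟩⟩⟩

theorem sqrtCount_mul {m n : ℕ} (h : m.Coprime n) (Δ : ℤ) :
    sqrtCount (m * n) Δ = sqrtCount m Δ * sqrtCount n Δ := by
  let e := ZMod.chineseRemainder h
  have hsq (x : ZMod (m * n)) : x ^ 2 = Δ ↔ (e x).1 ^ 2 = Δ ∧ (e x).2 ^ 2 = Δ := by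
    rw [← e.injective.eq_iff, map_pow, map_intCast, Prod.ext_iff]
    simp
  rw [sqrtCount, Nat.card_congr (e.toEquiv.subtypeEquiv
      (q := fun y : ZMod m × ZMod n => y.1 ^ 2 = (Δ : ZMod m) ∧ y.2 ^ 2 = (Δ : ZMod n)) hsq),
    Nat.card_congr (Equiv.subtypeProdEquivProd (p := fun y : ZMod m => y ^ 2 = (Δ : ZMod m))
      (q := fun y : ZMod n => y ^ 2 = (Δ : ZMod n))), Nat.card_prod]
  rfl

theorem sqrtCount_le_totient {n : ℕ} [NeZero n] {Δ : ℤ} (hΔ : IsUnit (Δ : ZMod n)) :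
    sqrtCount n Δ ≤ n.totient := by
  rw [← ZMod.card_units_eq_totient, ← Nat.card_eq_fintype_card]
  refine Nat.card_le_card_of_injective
    (fun x => ((isUnit_pow_iff two_ne_zero).1 (x.2 ▸ hΔ)).unit) fun x y hxy => Subtype.ext ?_
  simpa using congrArg Units.val hxy

section PrimePower

variable {p : ℕ} [hp : Fact p.Prime]

theorem sqrtCount_prime_pow_eq_zero {e : ℕ} (he : 2 ≤ e) {Δ : ℤ} (h1 : (p : ℤ) ∣ Δ)
    (h2 : ¬ (p : ℤ) ^ 2 ∣ Δ) : sqrtCount (p ^ e) Δ = 0 := by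
  refine Nat.card_eq_zero.2 (Or.inl ⟨fun ⟨x, hx⟩ => h2 ?_⟩)
  obtain ⟨X, rfl⟩ := ZMod.intCast_surjective x
  rw [ZMod.intCast_sq_eq_iff_dvd, Nat.cast_pow] at hx
  have hpX := (Nat.prime_iff_prime_int.mp hp.out).dvd_of_pow_dvd_sq_sub (by omega) h1 hx
  simpa using (pow_dvd_pow_of_dvd hpX 2).sub ((pow_dvd_pow _ he).trans hx)

theorem sqrtCount_prime_le_one {Δ : ℤ} (h : (p : ℤ) ∣ Δ) : sqrtCount p Δ ≤ 1 := by
  refine Finite.card_le_one_iff_subsingleton.2 ⟨fun ⟨x, hx⟩ ⟨y, hy⟩ => ?_⟩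
  rw [(ZMod.intCast_zmod_eq_zero_iff_dvd Δ p).2 h, pow_eq_zero_iff two_ne_zero] at hx hy
  exact Subtype.ext (hx.trans hy.symm)

theorem sqrtCount_prime_pow_add_two_le (e : ℕ) (Δ : ℤ) :
    sqrtCount (p ^ (e + 2)) ((p : ℤ) ^ 2 * Δ) ≤ p * sqrtCount (p ^ e) Δ := by
  have hper := periodic_dvd_sq_sub (n := p ^ e) (m := p ^ e) (dvd_mul_left _ _)
    (dvd_pow_self _ two_ne_zero) Δ
  rw [sqrtCount_eq_count, sqrtCount_eq_count, ← Nat.count_mul_of_periodic hper,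
    Nat.count_eq_card_filter_range, Nat.count_eq_card_filter_range]
  refine (card_le_card (t := image (p * ·) _) fun b hb => ?_).trans card_image_le
  rw [mem_filter, mem_range] at hb
  obtain ⟨hb_lt, hb_dvd⟩ := hb
  push_cast at hb_dvd
  have hpZ := Nat.prime_iff_prime_int.mp hp.out
  obtain ⟨z, rfl⟩ : p ∣ b := Int.natCast_dvd_natCast.1 <| hpZ.dvd_of_pow_dvd_sq_sub (by omega)
    (dvd_mul_of_dvd_left (dvd_pow_self _ two_ne_zero) _) hb_dvd
  refine mem_image.2 ⟨z, mem_filter.2 ⟨mem_range.2 ?_, ?_⟩, rfl⟩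
  · rw [pow_succ', pow_succ'] at hb_lt
    exact Nat.lt_of_mul_lt_mul_left hb_lt
  · have hp2 : (p : ℤ) ^ 2 ≠ 0 := pow_ne_zero _ (by exact_mod_cast hp.out.ne_zero)
    have hmod : (p : ℤ) ^ (e + 2) = p ^ 2 * (p ^ e : ℕ) := by push_cast; ring
    have hval : ((p * z : ℕ) : ℤ) ^ 2 - p ^ 2 * Δ = p ^ 2 * ((z : ℤ) ^ 2 - Δ) := by push_cast; ring
    rw [hmod, hval] at hb_dvd
    exact (mul_dvd_mul_iff_left hp2).1 hb_dvd

theorem ZMod.two_mul_sub_eq_zero_or_two_mul_add_eq_zero {k : ℕ} (hk : k ≠ 0)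
    {Δ : ℤ} (hΔ : ¬ (p : ℤ) ∣ Δ) {x y : ZMod (p ^ k)} (hx : x ^ 2 = Δ) (hy : y ^ 2 = Δ) :
    2 * (x - y) = 0 ∨ 2 * (x + y) = 0 := by
  obtain ⟨X, rfl⟩ := ZMod.intCast_surjective x
  obtain ⟨Y, rfl⟩ := ZMod.intCast_surjective y
  rw [ZMod.intCast_sq_eq_iff_dvd, Nat.cast_pow] at hx hy
  have hX : ¬ (p : ℤ) ∣ X := fun hpX => hΔ <| by
    simpa using (dvd_pow hpX two_ne_zero).sub ((dvd_pow_self _ hk).trans hx)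
  have h := Int.pow_dvd_two_mul_sub_or_two_mul_add hp.out hX (by simpa using hx.sub hy)
  rw [← Nat.cast_pow] at h
  simp only [← ZMod.intCast_zmod_eq_zero_iff_dvd] at h
  push_cast at h
  exact h

theorem sqrtCount_prime_pow_le_two_mul {k : ℕ} (hk : k ≠ 0) {Δ : ℤ}
    (hΔ : ¬ (p : ℤ) ∣ Δ) : sqrtCount (p ^ k) Δ ≤ 2 * #{z : ZMod (p ^ k) | 2 * z = 0} := by
  rw [sqrtCount, Nat.card_eq_fintype_card, Fintype.card_subtype]
  rcases (filter (fun x : ZMod (p ^ k) => x ^ 2 = Δ) univ).eq_empty_or_nonempty with h | ⟨y, hy⟩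
  · simp [h]
  set A : Finset (ZMod (p ^ k)) := {z | 2 * z = 0}
  rw [mem_filter] at hy
  calc #{x : ZMod (p ^ k) | x ^ 2 = Δ} ≤ #(A.image (y + ·) ∪ A.image (-y + ·)) := by
        refine card_le_card fun x hx => ?_
        rw [mem_filter] at hx
        rcases ZMod.two_mul_sub_eq_zero_or_two_mul_add_eq_zero hk hΔ hx.2 hy.2 with h | h
        · exact mem_union_left _ (mem_image.2 ⟨x - y, by simpa [A] using h, by ring⟩)
        · exact mem_union_right _ (mem_image.2 ⟨x + y, by simpa [A] using h, by ring⟩)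
    _ ≤ #A + #A := (card_union_le _ _).trans (add_le_add card_image_le card_image_le)
    _ = 2 * #A := (two_mul _).symm

theorem sqrtCount_prime_pow_le_two (hp2 : p ≠ 2) {k : ℕ} (hk : k ≠ 0) {Δ : ℤ}
    (hΔ : ¬ (p : ℤ) ∣ Δ) : sqrtCount (p ^ k) Δ ≤ 2 := by
  have h2 : IsUnit (2 : ZMod (p ^ k)) := by
    exact_mod_cast (ZMod.isUnit_iff_coprime 2 (p ^ k)).2
      (((Nat.coprime_primes Nat.prime_two hp.out).2 hp2.symm).pow_right k)
  have hA : #{z : ZMod (p ^ k) | 2 * z = 0} ≤ 1 :=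
    card_le_one.2 fun a ha b hb => by
      simp only [mem_filter, mem_univ, true_and, h2.mul_right_eq_zero] at ha hb
      rw [ha, hb]
  have := sqrtCount_prime_pow_le_two_mul hk hΔ
  omega

theorem sqrtCount_prime_pow_sq_le_of_not_dvd {c : ℝ} (hc : 1 ≤ c)
    (hunit : ∀ k Δ, k ≠ 0 → ¬ (p : ℤ) ∣ Δ → (sqrtCount (p ^ k) Δ : ℝ) ^ 2 ≤ c * p ^ k)
    (e : ℕ) (Δ : ℤ) : (sqrtCount (p ^ e) Δ : ℝ) ^ 2 ≤ c * p ^ e := by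
  induction e using Nat.strong_induction_on generalizing Δ with
  | _ e ih =>
  match e with
  | 0 => simpa [sqrtCount_one] using hc
  | 1 =>
    by_cases h1 : (p : ℤ) ∣ Δ
    · have hN : (sqrtCount p Δ : ℝ) ≤ 1 := by exact_mod_cast sqrtCount_prime_le_one h1
      have hp1 : (1 : ℝ) ≤ p := by exact_mod_cast hp.out.one_le
      rw [pow_one, pow_one]
      nlinarith
    · exact hunit 1 Δ one_ne_zero h1
  | e + 2 =>
    by_cases h1 : (p : ℤ) ∣ Δ
    · by_cases h2 : (p : ℤ) ^ 2 ∣ Δ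
      · obtain ⟨Δ, rfl⟩ := h2
        have hrec : (sqrtCount (p ^ (e + 2)) (p ^ 2 * Δ) : ℝ) ≤ p * sqrtCount (p ^ e) Δ := by
          exact_mod_cast sqrtCount_prime_pow_add_two_le e Δ
        calc (sqrtCount (p ^ (e + 2)) (p ^ 2 * Δ) : ℝ) ^ 2
            ≤ (p * sqrtCount (p ^ e) Δ : ℝ) ^ 2 := by gcongr
          _ = p ^ 2 * (sqrtCount (p ^ e) Δ : ℝ) ^ 2 := by ring
          _ ≤ p ^ 2 * (c * p ^ e) := by gcongr; exact ih e (by omega) Δ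
          _ = c * p ^ (e + 2) := by ring
      · rw [sqrtCount_prime_pow_eq_zero (by omega) h1 h2, Nat.cast_zero, zero_pow two_ne_zero]
        exact mul_nonneg (zero_le_one.trans hc) (by positivity)
    · exact hunit (e + 2) Δ (by omega) h1

end PrimePower

theorem sqrtCount_two_pow_le_four {k : ℕ} (hk : k ≠ 0) {Δ : ℤ} (hΔ : ¬ 2 ∣ Δ) :
    sqrtCount (2 ^ k) Δ ≤ 4 := by
  have hA : #{z : ZMod (2 ^ k) | 2 * z = 0} ≤ 2 := by
    simpa [two_nsmul, two_mul] using
      IsAddCyclic.card_nsmul_eq_zero_le (α := ZMod (2 ^ k)) two_pos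
  refine (sqrtCount_prime_pow_le_two_mul hk (by exact_mod_cast hΔ)).trans ?_
  convert Nat.mul_le_mul_left 2 hA

theorem sqrtCount_two_pow_sq_le {k : ℕ} (hk : k ≠ 0) {Δ : ℤ} (hΔ : ¬ 2 ∣ Δ) :
    sqrtCount (2 ^ k) Δ ^ 2 ≤ 2 * 2 ^ k := by
  rcases le_or_gt k 2 with hk2 | hk2
  · have hunit : IsUnit (Δ : ZMod (2 ^ k)) := by
      rw [ZMod.coe_int_isUnit_iff_isCoprime, Nat.cast_pow, Nat.cast_ofNat]
      exact (Int.prime_two.coprime_iff_not_dvd.2 hΔ).pow_left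
    have := sqrtCount_le_totient hunit
    rw [Nat.totient_prime_pow Nat.prime_two (by omega)] at this
    interval_cases k <;> simp at this ⊢ <;> nlinarith
  · have h4 := sqrtCount_two_pow_le_four hk hΔ
    have : 2 ^ 3 ≤ 2 ^ k := Nat.pow_le_pow_right two_pos hk2
    nlinarith

noncomputable def sqrtCountConst (p : ℕ) : ℝ :=
  if p = 2 then 2 else if p = 3 then 4 / 3 else 1

theorem one_le_sqrtCountConst (p : ℕ) : 1 ≤ sqrtCountConst p := by
  unfold sqrtCountConst; split_ifs <;> norm_num

theorem sqrtCount_sq_le_const_mul (p : ℕ) [hp : Fact p.Prime] (e : ℕ) (Δ : ℤ) :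
    (sqrtCount (p ^ e) Δ : ℝ) ^ 2 ≤ sqrtCountConst p * p ^ e := by
  refine sqrtCount_prime_pow_sq_le_of_not_dvd (one_le_sqrtCountConst p) (fun k Δ hk hΔ => ?_) e Δ
  rcases eq_or_ne p 2 with rfl | hp2
  · rw [sqrtCountConst, if_pos rfl]
    exact_mod_cast sqrtCount_two_pow_sq_le hk (by exact_mod_cast hΔ)
  have hN : (sqrtCount (p ^ k) Δ : ℝ) ≤ 2 := by
    exact_mod_cast sqrtCount_prime_pow_le_two hp2 hk hΔ
  have hcp : 4 ≤ sqrtCountConst p * p := by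
    rcases eq_or_ne p 3 with rfl | hp3
    · norm_num [sqrtCountConst]
    · have : p ≠ 4 := by rintro rfl; exact absurd hp.out (by norm_num)
      have : 4 ≤ p := by have := hp.out.two_le; omega
      simpa [sqrtCountConst, hp2, hp3] using (Nat.cast_le (α := ℝ)).2 this
  have hpk : (p : ℝ) ≤ p ^ k := le_self_pow₀ (by exact_mod_cast hp.out.one_le) hk
  nlinarith [one_le_sqrtCountConst p]

theorem prod_sqrtCountConst_le (s : Finset ℕ) : ∏ p ∈ s, sqrtCountConst p ≤ 8 / 3 := by
  calc ∏ p ∈ s, sqrtCountConst p = ∏ p ∈ s with p ∈ ({2, 3} : Finset ℕ), sqrtCountConst p := by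
        refine (prod_filter_of_ne fun p _ hp => ?_).symm
        by_contra h
        simp only [mem_insert, mem_singleton, not_or] at h
        simp [sqrtCountConst, h.1, h.2] at hp
    _ ≤ ∏ p ∈ ({2, 3} : Finset ℕ), sqrtCountConst p :=
        prod_le_prod_of_subset_of_one_le (fun p hp => (mem_filter.1 hp).2)
          (fun p _ => zero_le_one.trans (one_le_sqrtCountConst p))
          (fun p _ _ => one_le_sqrtCountConst p)
    _ = 8 / 3 := by norm_num [sqrtCountConst]

theorem sqrtCount_sq_le {n : ℕ} (hn : n ≠ 0) (Δ : ℤ) :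
    (sqrtCount n Δ : ℝ) ^ 2 ≤ 8 / 3 * n := by
  have hmul := Nat.multiplicative_factorization (fun m => (sqrtCount m Δ : ℝ) ^ 2)
    (fun x y hxy => by simp [sqrtCount_mul hxy, mul_pow]) (by simp [sqrtCount_one]) hn
  have hn' : (n : ℝ) = ∏ p ∈ n.primeFactors, (p : ℝ) ^ n.factorization p := by
    conv_lhs => rw [← Nat.prod_factorization_pow_eq_self hn]
    rw [Finsupp.prod, Nat.support_factorization]
    push_cast
    rfl
  calc (sqrtCount n Δ : ℝ) ^ 2
      = ∏ p ∈ n.primeFactors, (sqrtCount (p ^ n.factorization p) Δ : ℝ) ^ 2 := hmul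
    _ ≤ ∏ p ∈ n.primeFactors, sqrtCountConst p * (p : ℝ) ^ n.factorization p :=
        prod_le_prod (fun _ _ => by positivity) fun p hp =>
          have : Fact p.Prime := ⟨Nat.prime_of_mem_primeFactors hp⟩
          sqrtCount_sq_le_const_mul p _ _
    _ = (∏ p ∈ n.primeFactors, sqrtCountConst p) * n := by rw [prod_mul_distrib, hn']
    _ ≤ 8 / 3 * n := by gcongr; exact prod_sqrtCountConst_le _

theorem two_mul_card_filter_eq_sqrtCount (a : ℕ) (ha : 0 < a) (Δ : ℤ) :
    2 * ((range (2 * a)).filter fun b : ℕ => (4 * (a : ℤ)) ∣ (b : ℤ) ^ 2 - Δ).card =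
      sqrtCount (4 * a) Δ := by
  have : NeZero (4 * a) := ⟨by omega⟩
  have hper := periodic_dvd_sq_sub (n := 4 * a) (m := 2 * a) ⟨1, by ring⟩ ⟨a, by ring⟩ Δ
  push_cast at hper
  rw [sqrtCount_eq_count]
  push_cast
  rw [show 4 * a = 2 * (2 * a) by ring, Nat.count_mul_of_periodic hper,
    Nat.count_eq_card_filter_range]

theorem card_sqrt_discriminant_le_general (a : ℕ) (ha : 0 < a) (Δ : ℤ) :
    (((Finset.range (2 * a)).filter fun b : ℕ => (4 * (a : ℤ)) ∣ (b : ℤ) ^ 2 - Δ).card : ℝ) ≤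
      2 * Real.sqrt 2 / Real.sqrt 3 * Real.sqrt a := by
  set r := ((Finset.range (2 * a)).filter fun b : ℕ => (4 * (a : ℤ)) ∣ (b : ℤ) ^ 2 - Δ).card
  have hr : (2 * r : ℝ) ^ 2 ≤ 8 / 3 * (4 * a) := by
    have := sqrtCount_sq_le (n := 4 * a) (by omega) Δ
    rw [← two_mul_card_filter_eq_sqrtCount a ha Δ] at this
    exact_mod_cast this
  have hrhs : (2 * √2 / √3 * √a) ^ 2 = 8 / 3 * a := by
    rw [mul_pow, div_pow, mul_pow, Real.sq_sqrt, Real.sq_sqrt, Real.sq_sqrt] <;>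
      [ring; positivity; positivity; positivity]
  refine (pow_le_pow_iff_left₀ (by positivity) (by positivity) two_ne_zero).1 ?_
  rw [hrhs]
  nlinarith

/-- The number `r*_Δ(a)` of residues `b` mod `2a` with `b² ≡ Δ (mod 4a)` satisfies
`r*_Δ(a) ≤ (2√2/√3)·√a` for every positive integer `a` and every `Δ ≡ 0, 1 (mod 4)`. -/
theorem card_sqrt_discriminant_le (a : ℕ) (ha : 0 < a) (Δ : ℤ)
    (hΔ : Δ % 4 = 0 ∨ Δ % 4 = 1) :
    (((Finset.range (2 * a)).filter fun b : ℕ => (4 * (a : ℤ)) ∣ (b : ℤ) ^ 2 - Δ).card : ℝ) ≤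
      2 * Real.sqrt 2 / Real.sqrt 3 * Real.sqrt a :=
  card_sqrt_discriminant_le_general a ha Δ
end

section
/- The Salié sum S_{a,d,D}(n) = Σ_{b mod 2a, b² ≡ dD mod 4a} χ_D([a, b, (b²−dD)/4a]) e(nb/(2a)) satisfies |S_{a,d,D}(n)| ≤ (2√2/√3)·√a for all positive integers a, n, discriminants d, D with dD ≡ 0,1 mod 4. -/
/-!
Every term of the sum has norm at most `1`, so it suffices to count the `b`. As
`(b + 2a)² ≡ b² (mod 4a)`, twice their number is the number `T(4a, dD)` of square roots of `dD`
modulo `4a`. By the Chinese remainder theorem `T(mn, u) ≤ T(m, u) T(n, u)` for coprime `m, n`,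
and on prime powers `p T(p^k, u)² ≤ max(p, 4) p^k`: a unit has at most two square roots modulo
an odd prime power and at most four modulo a power of `2`, `T(p^k, u) = 0` when `p ∥ u` and
`k ≥ 2`, and `T(p^(k+2), p²w) ≤ p T(p^k, w)`, since every root is `p` times a root of `w` modulo
`p^(k+1)`. Splitting `m = 2^α 3^β r` gives `3 T(m, u)² ≤ 8m`.
-/

open Finset Function

theorem Nat.count_mul_of_periodic_s5 {p : ℕ → Prop} [DecidablePred p] {M : ℕ}
    (hp : Periodic p M) (q : ℕ) : Nat.count p (q * M) = q * Nat.count p M := by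
  induction q with
  | zero => simp
  | succ q ih =>
    have hshift : (fun k => p (q * M + k)) = p := funext fun k => by
      simpa [add_comm] using hp.nat_mul q k
    simp only [add_mul, one_mul, Nat.count_add, ih, hshift]

theorem count_dvd_sub_le_one (M : ℕ) (c : ℤ) :
    Nat.count (fun z : ℕ => (M : ℤ) ∣ z - c) M ≤ 1 := by
  rw [Nat.count_eq_card_filter_range, card_le_one]
  simp only [mem_filter, mem_range]
  rintro z ⟨hz, hzc⟩ z' ⟨hz', hz'c⟩
  have hzz' : (z' : ℤ) ≡ z [ZMOD M] :=
    Int.modEq_iff_dvd.mpr (sub_sub_sub_cancel_right (z : ℤ) z' c ▸ dvd_sub hzc hz'c)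
  exact (Int.natCast_modEq_iff.mp hzz').eq_of_lt_of_lt hz' hz |>.symm

theorem count_dvd_sub_or_dvd_add_le (q M : ℕ) (c : ℤ) :
    Nat.count (fun y : ℕ => (M : ℤ) ∣ y - c ∨ (M : ℤ) ∣ y + c) (q * M) ≤ 2 * q := by
  have hper : Periodic (fun y : ℕ => (M : ℤ) ∣ y - c ∨ (M : ℤ) ∣ y + c) M := fun y => by
    simp only [Nat.cast_add, add_sub_right_comm, add_right_comm _ (M : ℤ), dvd_add_self_right]
  have h₁ := count_dvd_sub_le_one M c
  have h₂ := count_dvd_sub_le_one M (-c)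
  simp only [Nat.count_eq_card_filter_range, sub_neg_eq_add] at h₁ h₂
  rw [Nat.count_mul_of_periodic_s5 hper, Nat.count_eq_card_filter_range, mul_comm 2 q]
  refine Nat.mul_le_mul_left q ?_
  simp only [filter_or]
  exact (card_union_le _ _).trans (by omega)

theorem Int.pow_dvd_sub_or_pow_dvd_add_of_pow_dvd_sq_sub_sq {p x y : ℤ} (hp : Prime p)
    (hp2 : ¬p ∣ 2) (hx : ¬p ∣ x) {k : ℕ} (h : p ^ k ∣ y ^ 2 - x ^ 2) :
    p ^ k ∣ y - x ∨ p ^ k ∣ y + x := by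
  rw [sq_sub_sq, mul_comm] at h
  have hnot_both : ¬(p ∣ y - x ∧ p ∣ y + x) := fun ⟨h₁, h₂⟩ => by
    have h2x : p ∣ 2 * x := by simpa [two_mul] using dvd_sub h₂ h₁
    exact (hp.dvd_mul.mp h2x).elim hp2 hx
  rcases not_and_or.mp hnot_both with h₁ | h₂
  · exact Or.inr (hp.pow_dvd_of_dvd_mul_left k h₁ h)
  · exact Or.inl (hp.pow_dvd_of_dvd_mul_right k h₂ h)

theorem Int.two_pow_dvd_sub_or_two_pow_dvd_add_of_two_pow_succ_dvd_sq_sub_sq {x y : ℤ}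
    (hx : ¬2 ∣ x) {k : ℕ} (h : 2 ^ (k + 1) ∣ y ^ 2 - x ^ 2) :
    2 ^ k ∣ y - x ∨ 2 ^ k ∣ y + x := by
  rw [sq_sub_sq, mul_comm] at h
  have h2 : (2 : ℤ) ∣ (y - x) * (y + x) := (dvd_pow_self 2 k.succ_ne_zero).trans h
  obtain ⟨A, hA⟩ : (2 : ℤ) ∣ y - x := by rcases Int.prime_two.dvd_mul.mp h2 with h | h <;> omega
  obtain ⟨B, hB⟩ : (2 : ℤ) ∣ y + x := by omega
  -- `B - A = x` is odd
  have hAB : ¬2 ∣ A ∨ ¬2 ∣ B := by omega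
  rw [hA, hB, pow_succ', show 2 * A * (2 * B) = 2 * (A * (2 * B)) by ring,
    mul_dvd_mul_iff_left two_ne_zero] at h
  rcases hAB with hA' | hB'
  · exact Or.inr (hB ▸ Int.prime_two.pow_dvd_of_dvd_mul_left k hA' h)
  · rw [mul_left_comm, ← mul_assoc] at h
    exact Or.inl (hA ▸ Int.prime_two.pow_dvd_of_dvd_mul_right k hB' h)

def sqrtModCount (m : ℕ) (u : ℤ) : ℕ :=
  Nat.count (fun x : ℕ => (m : ℤ) ∣ (x : ℤ) ^ 2 - u) m

theorem periodic_dvd_sq_sub_s5 {N M : ℕ} (h2M : (N : ℤ) ∣ 2 * M) (hM2 : (N : ℤ) ∣ (M : ℤ) ^ 2)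
    (u : ℤ) : Periodic (fun x : ℕ => (N : ℤ) ∣ (x : ℤ) ^ 2 - u) M := fun x => by
  have hexpand : ((x + M : ℕ) : ℤ) ^ 2 - u = ((x : ℤ) ^ 2 - u) + (2 * M * x + (M : ℤ) ^ 2) := by
    push_cast; ring
  simp only [hexpand, dvd_add_left (dvd_add (h2M.mul_right _) hM2)]

theorem sqrtModCount_one (u : ℤ) : sqrtModCount 1 u = 1 := by
  simp [sqrtModCount]

theorem sqrtModCount_emod (m : ℕ) (u : ℤ) : sqrtModCount m (u % m) = sqrtModCount m u := by
  have hmod (a : ℤ) : (m : ℤ) ∣ a - u % m ↔ (m : ℤ) ∣ a - u :=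
    ((Int.mod_modEq u m).sub_left a).dvd_iff
  simp only [sqrtModCount, hmod]

theorem sqrtModCount_four_le_two (u : ℤ) : sqrtModCount 4 u ≤ 2 := by
  rw [← sqrtModCount_emod]
  have h0 : 0 ≤ u % (4 : ℕ) := Int.emod_nonneg _ (by norm_num)
  have h4 : u % (4 : ℕ) < 4 := Int.emod_lt_of_pos _ (by norm_num)
  interval_cases u % (4 : ℕ) <;> decide

theorem sqrtModCount_le_of_roots (q M : ℕ) (u : ℤ)
    (h : ∀ x y : ℤ, ((q * M : ℕ) : ℤ) ∣ x ^ 2 - u → ((q * M : ℕ) : ℤ) ∣ y ^ 2 - u →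
      (M : ℤ) ∣ y - x ∨ (M : ℤ) ∣ y + x) :
    sqrtModCount (q * M) u ≤ 2 * q := by
  obtain ⟨x₀, hx₀⟩ : ∃ x₀ : ℤ, ∀ y < q * M, ((q * M : ℕ) : ℤ) ∣ (y : ℤ) ^ 2 - u →
      (M : ℤ) ∣ y - x₀ ∨ (M : ℤ) ∣ y + x₀ := by
    by_cases hroot : ∃ x₀ : ℕ, ((q * M : ℕ) : ℤ) ∣ (x₀ : ℤ) ^ 2 - u
    · obtain ⟨x₀, hx₀⟩ := hroot
      exact ⟨x₀, fun y _ hy => h _ _ hx₀ hy⟩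
    · exact ⟨0, fun y _ hy => (hroot ⟨y, hy⟩).elim⟩
  exact (Nat.count_mono_left hx₀).trans (count_dvd_sub_or_dvd_add_le q M x₀)

theorem not_dvd_of_dvd_sq_sub {p x u : ℤ} (h : p ∣ x ^ 2 - u) (hu : ¬p ∣ u) : ¬p ∣ x :=
  fun hx => hu (by simpa using dvd_sub (dvd_pow hx two_ne_zero) h)

theorem sqrtModCount_prime_le_two {p : ℕ} (hp : p.Prime) (u : ℤ) : sqrtModCount p u ≤ 2 := by
  have hroots := sqrtModCount_le_of_roots 1 p u fun x y hx hy => by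
    have hxy : (p : ℤ) ∣ (y - x) * (y + x) := by
      simpa [sq_sub_sq, mul_comm] using dvd_sub hy hx
    exact (Nat.prime_iff_prime_int.mp hp).dvd_mul.mp hxy
  simpa using hroots

theorem sqrtModCount_prime_pow_le_two {p k : ℕ} (hp : p.Prime) (hp2 : p ≠ 2) (hk : k ≠ 0)
    {u : ℤ} (hu : ¬(p : ℤ) ∣ u) : sqrtModCount (p ^ k) u ≤ 2 := by
  have hpk : (p : ℤ) ∣ ((p ^ k : ℕ) : ℤ) := by exact_mod_cast dvd_pow_self p hk
  have hp2' : ¬(p : ℤ) ∣ 2 := fun h =>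
    hp2 ((Nat.prime_dvd_prime_iff_eq hp Nat.prime_two).mp (by exact_mod_cast h))
  have hroots := sqrtModCount_le_of_roots 1 (p ^ k) u fun x y hx hy => by
    rw [one_mul] at hx hy
    have hxy : ((p ^ k : ℕ) : ℤ) ∣ y ^ 2 - x ^ 2 := by simpa using dvd_sub hy hx
    push_cast at hxy ⊢
    exact Int.pow_dvd_sub_or_pow_dvd_add_of_pow_dvd_sq_sub_sq (Nat.prime_iff_prime_int.mp hp)
      hp2' (not_dvd_of_dvd_sq_sub (hpk.trans hx) hu) hxy
  simpa using hroots

theorem sqrtModCount_two_pow_le_four (k : ℕ) {u : ℤ} (hu : ¬2 ∣ u) :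
    sqrtModCount (2 ^ (k + 1)) u ≤ 4 := by
  rw [pow_succ']
  refine sqrtModCount_le_of_roots 2 (2 ^ k) u fun x y hx hy => ?_
  have hxy : ((2 * 2 ^ k : ℕ) : ℤ) ∣ y ^ 2 - x ^ 2 := by simpa using dvd_sub hy hx
  have h2 : (2 : ℤ) ∣ ((2 * 2 ^ k : ℕ) : ℤ) := by push_cast; exact dvd_mul_right _ _
  push_cast at hxy ⊢
  rw [← pow_succ'] at hxy
  exact Int.two_pow_dvd_sub_or_two_pow_dvd_add_of_two_pow_succ_dvd_sq_sub_sq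
    (not_dvd_of_dvd_sq_sub (h2.trans hx) hu) hxy

theorem sqrtModCount_eq_zero {p k : ℕ} (hp : p.Prime) (hk : 2 ≤ k) {u : ℤ}
    (hu : (p : ℤ) ∣ u) (hu2 : ¬(p : ℤ) ^ 2 ∣ u) : sqrtModCount (p ^ k) u = 0 := by
  refine Nat.count_iff_forall_not.mpr fun x _ hx => hu2 ?_
  push_cast at hx
  have hpx : (p : ℤ) ∣ x := (Nat.prime_iff_prime_int.mp hp).dvd_of_dvd_pow
    (by simpa using dvd_add ((dvd_pow_self _ (by omega)).trans hx) hu)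
  simpa using dvd_sub (pow_dvd_pow_of_dvd hpx 2) ((pow_dvd_pow _ hk).trans hx)

theorem sqrtModCount_prime_pow_add_two_le {p : ℕ} (hp : p.Prime) (k : ℕ) (w : ℤ) :
    sqrtModCount (p ^ (k + 2)) ((p : ℤ) ^ 2 * w) ≤ p * sqrtModCount (p ^ k) w := by
  set roots := (range (p * p ^ k)).filter (fun y : ℕ => ((p ^ k : ℕ) : ℤ) ∣ (y : ℤ) ^ 2 - w)
  have hsub : (range (p ^ (k + 2))).filter
      (fun x : ℕ => ((p ^ (k + 2) : ℕ) : ℤ) ∣ (x : ℤ) ^ 2 - (p : ℤ) ^ 2 * w) ⊆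
      roots.image (p * ·) := by
    intro x hx
    simp only [mem_filter, mem_range] at hx
    obtain ⟨hxlt, hx⟩ := hx
    push_cast at hx
    obtain ⟨y, rfl⟩ : p ∣ x := by
      have : (p : ℤ) ∣ (x : ℤ) ^ 2 := by
        simpa using dvd_add ((dvd_pow_self _ (by omega)).trans hx)
          (dvd_mul_of_dvd_left (dvd_pow_self _ two_ne_zero) w)
      exact_mod_cast (Nat.prime_iff_prime_int.mp hp).dvd_of_dvd_pow this
    refine mem_image.mpr ⟨y, mem_filter.mpr ⟨mem_range.mpr ?_, ?_⟩, rfl⟩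
    · rw [pow_succ', pow_succ'] at hxlt
      exact Nat.lt_of_mul_lt_mul_left hxlt
    · have hp0 : (p : ℤ) ^ 2 ≠ 0 := pow_ne_zero 2 (by exact_mod_cast hp.ne_zero)
      rw [pow_add, show ((p * y : ℕ) : ℤ) ^ 2 - (p : ℤ) ^ 2 * w = (p : ℤ) ^ 2 * (y ^ 2 - w) by
        push_cast; ring, mul_comm, mul_dvd_mul_iff_left hp0] at hx
      exact_mod_cast hx
  have hper := periodic_dvd_sq_sub_s5 (N := p ^ k) (M := p ^ k) (dvd_mul_left _ _)
    (dvd_pow_self _ two_ne_zero) w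
  calc sqrtModCount (p ^ (k + 2)) ((p : ℤ) ^ 2 * w)
      ≤ (roots.image (p * ·)).card := by
        rw [sqrtModCount, Nat.count_eq_card_filter_range]; exact card_le_card hsub
    _ ≤ roots.card := card_image_le
    _ = p * sqrtModCount (p ^ k) w := by
        rw [← Nat.count_eq_card_filter_range, Nat.count_mul_of_periodic_s5 hper]; rfl

theorem prime_mul_sqrtModCount_sq_le_of_not_dvd {p : ℕ} (hp : p.Prime) (k : ℕ) {u : ℤ}
    (hu : ¬(p : ℤ) ∣ u) : p * sqrtModCount (p ^ (k + 2)) u ^ 2 ≤ max p 4 * p ^ (k + 2) := by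
  rcases eq_or_ne p 2 with rfl | hp2
  · rcases k with _ | k
    · show 2 * sqrtModCount 4 u ^ 2 ≤ max 2 4 * 4
      calc 2 * sqrtModCount 4 u ^ 2 ≤ 2 * 2 ^ 2 := by gcongr; exact sqrtModCount_four_le_two u
        _ ≤ max 2 4 * 4 := by norm_num
    · have h := sqrtModCount_two_pow_le_four (k + 2) (by exact_mod_cast hu)
      rw [show k + 2 + 1 = k + 1 + 2 by ring] at h
      calc 2 * sqrtModCount (2 ^ (k + 1 + 2)) u ^ 2 ≤ 2 * 4 ^ 2 := by gcongr
        _ = 4 * 2 ^ 3 := by norm_num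
        _ ≤ max 2 4 * 2 ^ (k + 1 + 2) :=
          Nat.mul_le_mul (le_max_right _ _) (Nat.pow_le_pow_right two_pos (by omega))
  · calc p * sqrtModCount (p ^ (k + 2)) u ^ 2 ≤ p * 2 ^ 2 := by
          gcongr; exact sqrtModCount_prime_pow_le_two hp hp2 (by omega) hu
      _ = 4 * p := by ring
      _ ≤ max p 4 * p ^ (k + 2) := Nat.mul_le_mul (le_max_right _ _) (Nat.le_self_pow (by omega) p)

theorem prime_mul_sqrtModCount_sq_le {p : ℕ} (hp : p.Prime) (k : ℕ) (u : ℤ) :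
    p * sqrtModCount (p ^ k) u ^ 2 ≤ max p 4 * p ^ k := by
  induction k using Nat.twoStepInduction generalizing u with
  | zero => simp [sqrtModCount_one]
  | one =>
    calc p * sqrtModCount (p ^ 1) u ^ 2 ≤ p * 2 ^ 2 := by
          gcongr; simpa using sqrtModCount_prime_le_two hp u
      _ = 4 * p ^ 1 := by ring
      _ ≤ max p 4 * p ^ 1 := Nat.mul_le_mul_right _ (le_max_right _ _)
  | more k ih _ =>
    by_cases hu : (p : ℤ) ∣ u
    · by_cases hu2 : (p : ℤ) ^ 2 ∣ u
      · obtain ⟨w, rfl⟩ := hu2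
        calc p * sqrtModCount (p ^ (k + 2)) ((p : ℤ) ^ 2 * w) ^ 2
            ≤ p * (p * sqrtModCount (p ^ k) w) ^ 2 := by
              gcongr; exact sqrtModCount_prime_pow_add_two_le hp k w
          _ = p ^ 2 * (p * sqrtModCount (p ^ k) w ^ 2) := by ring
          _ ≤ p ^ 2 * (max p 4 * p ^ k) := Nat.mul_le_mul_left _ (ih w)
          _ = max p 4 * p ^ (k + 2) := by ring
      · simp [sqrtModCount_eq_zero hp (by omega : 2 ≤ k + 2) hu hu2]
    · exact prime_mul_sqrtModCount_sq_le_of_not_dvd hp k hu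

theorem sqrtModCount_mul_le {m n : ℕ} (hmn : m.Coprime n) (u : ℤ) :
    sqrtModCount (m * n) u ≤ sqrtModCount m u * sqrtModCount n u := by
  have hmod {N : ℕ} (x : ℕ) : (N : ℤ) ∣ ((x % N : ℕ) : ℤ) ^ 2 - u ↔ (N : ℤ) ∣ (x : ℤ) ^ 2 - u := by
    push_cast
    exact (((Int.mod_modEq x N).pow 2).sub_right u).dvd_iff
  simp only [sqrtModCount, Nat.count_eq_card_filter_range, ← card_product]
  refine card_le_card_of_injOn (fun x => (x % m, x % n)) (fun x hx => ?_) (fun x hx y hy hxy => ?_)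
  · simp only [coe_filter, mem_range, Set.mem_ofPred_eq] at hx
    have hm : m ≠ 0 := by rintro rfl; simp at hx
    have hn : n ≠ 0 := by rintro rfl; simp at hx
    simp only [coe_product, coe_filter, mem_range, Set.mem_prod, Set.mem_ofPred_eq, hmod]
    push_cast at hx
    exact ⟨⟨Nat.mod_lt _ (by omega), (dvd_mul_right _ _).trans hx.2⟩,
      ⟨Nat.mod_lt _ (by omega), (dvd_mul_left _ _).trans hx.2⟩⟩
  · simp only [coe_filter, mem_range, Set.mem_ofPred_eq] at hx hy
    simp only [Prod.mk.injEq] at hxy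
    exact ((Nat.modEq_and_modEq_iff_modEq_mul hmn).mp hxy).eq_of_lt_of_lt hx.1 hy.1

theorem sqrtModCount_sq_le_of_coprime_six {m : ℕ} (h2 : ¬2 ∣ m) (h3 : ¬3 ∣ m) (u : ℤ) :
    sqrtModCount m u ^ 2 ≤ m := by
  induction m using Nat.recOnPrimeCoprime generalizing u with
  | zero => simp at h2
  | prime_pow p k hp =>
    rcases k with _ | k
    · simp [sqrtModCount_one]
    have hp2 : p ≠ 2 := by rintro rfl; exact h2 (dvd_pow_self 2 k.succ_ne_zero)
    have hp3 : p ≠ 3 := by rintro rfl; exact h3 (dvd_pow_self 3 k.succ_ne_zero)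
    have hp4 : p ≠ 4 := by rintro rfl; norm_num at hp
    have hbound := prime_mul_sqrtModCount_sq_le hp (k + 1) u
    rw [max_eq_left (by have := hp.two_le; omega)] at hbound
    exact Nat.le_of_mul_le_mul_left hbound hp.pos
  | coprime a b _ _ hab iha ihb =>
    calc sqrtModCount (a * b) u ^ 2 ≤ (sqrtModCount a u * sqrtModCount b u) ^ 2 := by
          gcongr; exact sqrtModCount_mul_le hab u
      _ = sqrtModCount a u ^ 2 * sqrtModCount b u ^ 2 := mul_pow _ _ _
      _ ≤ a * b :=
        Nat.mul_le_mul (iha (fun h => h2 (h.mul_right b)) (fun h => h3 (h.mul_right b)) u)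
          (ihb (fun h => h2 (h.mul_left a)) (fun h => h3 (h.mul_left a)) u)

theorem three_mul_sqrtModCount_sq_le (m : ℕ) (u : ℤ) : 3 * sqrtModCount m u ^ 2 ≤ 8 * m := by
  rcases eq_or_ne m 0 with rfl | hm
  · simp [sqrtModCount]
  obtain ⟨α, m', h2, rfl⟩ := Nat.exists_eq_pow_mul_and_not_dvd hm 2 (by norm_num)
  obtain ⟨β, r, h3, rfl⟩ :=
    Nat.exists_eq_pow_mul_and_not_dvd (right_ne_zero_of_mul hm) 3 (by norm_num)
  have hmul : sqrtModCount (2 ^ α * (3 ^ β * r)) u ≤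
      sqrtModCount (2 ^ α) u * (sqrtModCount (3 ^ β) u * sqrtModCount r u) :=
    (sqrtModCount_mul_le ((Nat.prime_two.coprime_iff_not_dvd.mpr h2).pow_left α) u).trans
      (Nat.mul_le_mul_left _
        (sqrtModCount_mul_le ((Nat.prime_three.coprime_iff_not_dvd.mpr h3).pow_left β) u))
  have h2pow := prime_mul_sqrtModCount_sq_le Nat.prime_two α u
  have h3pow := prime_mul_sqrtModCount_sq_le Nat.prime_three β u
  have hr := sqrtModCount_sq_le_of_coprime_six (fun h => h2 (h.mul_left _)) h3 u
  simp only [show max 2 4 = 4 from rfl, show max 3 4 = 4 from rfl] at h2pow h3pow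
  calc 3 * sqrtModCount (2 ^ α * (3 ^ β * r)) u ^ 2
      ≤ 3 * (sqrtModCount (2 ^ α) u * (sqrtModCount (3 ^ β) u * sqrtModCount r u)) ^ 2 := by
        gcongr
    _ = sqrtModCount (2 ^ α) u ^ 2 * ((3 * sqrtModCount (3 ^ β) u ^ 2) * sqrtModCount r u ^ 2) := by
        ring
    _ ≤ (2 * 2 ^ α) * ((4 * 3 ^ β) * r) := by gcongr; omega
    _ = 8 * (2 ^ α * (3 ^ β * r)) := by ring

theorem le_two_mul_sqrt_two_div_sqrt_three_mul_sqrt {x y : ℝ} (h : 3 * x ^ 2 ≤ 8 * y) :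
    x ≤ 2 * √2 / √3 * √y := by
  have hy : 0 ≤ y := by nlinarith [sq_nonneg x]
  refine le_of_pow_le_pow_left₀ two_ne_zero (by positivity) ?_
  rw [mul_pow, div_pow, mul_pow, Real.sq_sqrt zero_le_two, Real.sq_sqrt zero_le_three,
    Real.sq_sqrt hy]
  linarith

open Complex in
theorem salie_sum_bound_general (χ : ℤ → ℤ → ℤ → ℤ)
    (hχ : ∀ x y z : ℤ, χ x y z = -1 ∨ χ x y z = 0 ∨ χ x y z = 1)
    (a n : ℕ) (d D : ℤ) :
    ‖∑ b ∈ (Finset.range (2 * a)).filter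
        (fun b : ℕ => (4 * (a : ℤ)) ∣ (b : ℤ) ^ 2 - d * D),
        (χ (a : ℤ) (b : ℤ) (((b : ℤ) ^ 2 - d * D) / (4 * (a : ℤ))) : ℂ) *
          Complex.exp (2 * Real.pi * Complex.I * n * b / (2 * a))‖ ≤
      2 * Real.sqrt 2 / Real.sqrt 3 * Real.sqrt a := by
  set S := (range (2 * a)).filter (fun b : ℕ => (4 * (a : ℤ)) ∣ (b : ℤ) ^ 2 - d * D)
  have hterm (b : ℕ) : ‖(χ (a : ℤ) (b : ℤ) (((b : ℤ) ^ 2 - d * D) / (4 * (a : ℤ))) : ℂ) *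
      exp (2 * Real.pi * I * n * b / (2 * a))‖ ≤ 1 := by
    rw [norm_mul, show (2 * Real.pi * I * n * b / (2 * a) : ℂ) =
      ((2 * Real.pi * n * b / (2 * a) : ℝ) : ℂ) * I by push_cast; ring, norm_exp_ofReal_mul_I,
      mul_one]
    rcases hχ a b (((b : ℤ) ^ 2 - d * D) / (4 * a)) with h | h | h <;> simp [h]
  have hnorm := (norm_sum_le _ _).trans
    ((sum_le_card_nsmul S _ 1 fun b _ => hterm b).trans_eq (nsmul_one _))
  have hcount : sqrtModCount (2 * (2 * a)) (d * D) = 2 * #S := by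
    have hper := periodic_dvd_sq_sub_s5 (N := 2 * (2 * a)) (M := 2 * a) (by push_cast; rfl)
      (by push_cast; exact ⟨a, by ring⟩) (d * D)
    rw [sqrtModCount, Nat.count_mul_of_periodic_s5 hper, Nat.count_eq_card_filter_range]
    simp only [S, show ((2 * (2 * a) : ℕ) : ℤ) = 4 * a by push_cast; ring]
  have hbound := three_mul_sqrtModCount_sq_le (2 * (2 * a)) (d * D)
  rw [hcount] at hbound
  refine hnorm.trans (le_two_mul_sqrt_two_div_sqrt_three_mul_sqrt ?_)
  exact_mod_cast (by nlinarith : 3 * #S ^ 2 ≤ 8 * a)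

open Complex in
/-- The Salié sum `S_{a,d,D}(n) = Σ_{b mod 2a, b² ≡ dD mod 4a} χ_D([a,b,(b²−dD)/4a]) e(nb/2a)`
satisfies `|S_{a,d,D}(n)| ≤ (2√2/√3)·√a` for all positive integers `a, n` and all
discriminants `d, D` with `dD ≡ 0, 1 (mod 4)`.  Here `χ_D` is the genus character on
positive definite integral binary quadratic forms `[a,b,c]`, taking values in `{−1,0,1}`. -/
theorem salie_sum_bound (χ : ℤ → ℤ → ℤ → ℤ)
    (hχ : ∀ x y z : ℤ, χ x y z = -1 ∨ χ x y z = 0 ∨ χ x y z = 1)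
    (a n : ℕ) (ha : 0 < a) (hn : 0 < n) (d D : ℤ) (hdD : d * D % 4 = 0 ∨ d * D % 4 = 1) :
    ‖∑ b ∈ (Finset.range (2 * a)).filter
        (fun b : ℕ => (4 * (a : ℤ)) ∣ (b : ℤ) ^ 2 - d * D),
        (χ (a : ℤ) (b : ℤ) (((b : ℤ) ^ 2 - d * D) / (4 * (a : ℤ))) : ℂ) *
          Complex.exp (2 * Real.pi * Complex.I * n * b / (2 * a))‖ ≤
      2 * Real.sqrt 2 / Real.sqrt 3 * Real.sqrt a :=
  salie_sum_bound_general χ hχ a n d D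
end
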